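/- arXiv:2501.15863 — 2 statements merged into one kernel-verified Lean document; each statement's English description precedes it below -/
import Mathlib

section
/- The set Π_p^{Hv}(U,F) of p-summing weighted holomorphic mappings with the norm π_p^{Hv} is a Banach space: π_p^{Hv} is a norm on Π_p^{Hv}(U,F), it dominates ‖·‖_v, and every absolutely π_p^{Hv}-convergent series converges in π_p^{Hv}-norm. -/
open scoped BigOperators
open MeasureTheory

noncomputable section

/-- The closed unit ball of the weighted holomorphic space `Hv(U)`. -/
def HvBall {E : Type*} [NormedAddCommGroup E] [NormedSpace ℂ E]
    (v : E → ℝ) (U : Set E) : Set (E → ℂ) :=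
  {g | DifferentiableOn ℂ g U ∧ ∀ x ∈ U, v x * ‖g x‖ ≤ 1}

/-- `sup_{g ∈ B_{Hv(U)}} (∑ |λᵢ|^p v(xᵢ)^p |g(xᵢ)|^p)^(1/p)`. -/
def hvSup {E : Type*} [NormedAddCommGroup E] [NormedSpace ℂ E]
    (p : ℝ) (v : E → ℝ) (U : Set E) {n : ℕ} (lam : Fin n → ℂ) (x : Fin n → E) : ℝ :=
  ⨆ g : HvBall v U, (∑ i, ‖lam i‖ ^ p * v (x i) ^ p * ‖(g : E → ℂ) (x i)‖ ^ p) ^ (1 / p)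

/-- `f` satisfies the `p`-summing weighted holomorphic inequality with constant `C`. -/
def PSummingWith {E F : Type*} [NormedAddCommGroup E] [NormedSpace ℂ E]
    [NormedAddCommGroup F] [NormedSpace ℂ F]
    (p : ℝ) (v : E → ℝ) (U : Set E) (f : E → F) (C : ℝ) : Prop :=
  ∀ (n : ℕ) (lam : Fin n → ℂ) (x : Fin n → E), (∀ i, x i ∈ U) →
    (∑ i, ‖lam i‖ ^ p * v (x i) ^ p * ‖f (x i)‖ ^ p) ^ (1 / p) ≤ C * hvSup p v U lam x

/-- The `p`-summing weighted holomorphic norm `π_p^{Hv}(f)`. -/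
def pihv {E F : Type*} [NormedAddCommGroup E] [NormedSpace ℂ E]
    [NormedAddCommGroup F] [NormedSpace ℂ F]
    (p : ℝ) (v : E → ℝ) (U : Set E) (f : E → F) : ℝ :=
  sInf {C | 0 ≤ C ∧ PSummingWith p v U f C}

/-! Testing the `p`-summing inequality at a single point, where `hvSup ≤ 1`, gives
`v x * ‖f x‖ ≤ π_p^{Hv}(f)`; definiteness follows, and Minkowski's inequality for the vectors
`(|λᵢ| v(xᵢ) ‖f(xᵢ)‖)ᵢ` gives the triangle inequality. For completeness, the pointwise bound
makes an absolutely `π_p^{Hv}`-convergent series converge locally uniformly (`v` is locally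
bounded below), so its sum is holomorphic by the Cauchy estimates; since the `p`-summing
inequality with a fixed constant survives pointwise limits, the `n`-th tail has norm at most
`∑_{k ≥ n} π_p^{Hv}(f_k)`. -/

open Filter Metric Topology

section Holomorphic

variable {E F : Type*} [NormedAddCommGroup E] [NormedSpace ℂ E]
  [NormedAddCommGroup F] [NormedSpace ℂ F]

/-- Weierstrass M-test for holomorphic maps between Banach spaces: the Cauchy estimate
`‖Df(z)‖ ≤ 2M / r` turns local bounds on the functions into local bounds on their
derivatives. -/
theorem differentiableOn_tsum_of_locally_summable_bound [CompleteSpace F] {ι : Type*}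
    {U : Set E} {fs : ι → E → F} (hU : IsOpen U) (hd : ∀ i, DifferentiableOn ℂ (fs i) U)
    (hb : ∀ x ∈ U, ∃ u : ι → ℝ, Summable u ∧ ∀ᶠ y in 𝓝 x, ∀ i, ‖fs i y‖ ≤ u i) :
    DifferentiableOn ℂ (fun y => ∑' i, fs i y) U := by
  intro x hx
  obtain ⟨u, hu, hbd⟩ := hb x hx
  obtain ⟨r, hr, hball⟩ := Metric.eventually_nhds_iff_ball.1 (hbd.and (hU.mem_nhds hx))
  have hr2 : 0 < r / 2 := half_pos hr
  have hsub : ∀ z ∈ ball x (r / 2), ball z (r / 2) ⊆ ball x r := fun z hz =>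
    ball_subset_ball' (by linarith [mem_ball.1 hz])
  have hderiv : ∀ i, ∀ z ∈ ball x (r / 2), ‖fderiv ℂ (fs i) z‖ ≤ 2 * u i / (r / 2) := by
    intro i z hz
    refine Complex.norm_fderiv_le_div_of_mapsTo_ball
      ((hd i).mono fun y hy => (hball y (hsub z hz hy)).2) (fun y hy => ?_) hr2
    rw [mem_closedBall, dist_eq_norm, two_mul]
    exact (norm_sub_le _ _).trans (add_le_add ((hball y (hsub z hz hy)).1 i)
      ((hball z (ball_subset_ball (half_le_self hr.le) hz)).1 i))
  have hhas : ∀ i, ∀ z ∈ ball x (r / 2), HasFDerivAt (fs i) (fderiv ℂ (fs i) z) z :=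
    fun i z hz => ((hd i).differentiableAt
      (hU.mem_nhds (hball z (ball_subset_ball (half_le_self hr.le) hz)).2)).hasFDerivAt
  have hsum : Summable fun i => fs i x :=
    .of_norm_bounded hu fun i => (hball x (mem_ball_self hr)).1 i
  exact (hasFDerivAt_tsum_of_isPreconnected ((hu.mul_left 2).div_const _) isOpen_ball
    (convex_ball x _).isPreconnected hhas hderiv (mem_ball_self hr2) hsum
    (mem_ball_self hr2)).differentiableAt.differentiableWithinAt

end Holomorphic

section WeightedLpNorm

variable {E F : Type*} [SeminormedAddCommGroup F] {p : ℝ} {v : E → ℝ}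
  {n : ℕ} {lam : Fin n → ℂ} {x : Fin n → E}

/-- The left-hand side of the `p`-summing inequality; `hvSup` is its supremum over `HvBall`. -/
def weightedLpNorm (p : ℝ) (v : E → ℝ) (f : E → F) {n : ℕ} (lam : Fin n → ℂ)
    (x : Fin n → E) : ℝ :=
  (∑ i, ‖lam i‖ ^ p * v (x i) ^ p * ‖f (x i)‖ ^ p) ^ (1 / p)

theorem weightedLpNorm_nonneg (hv : ∀ i, 0 ≤ v (x i)) (f : E → F) :
    0 ≤ weightedLpNorm p v f lam x := by
  refine Real.rpow_nonneg (Finset.sum_nonneg fun i _ => ?_) _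
  have := hv i
  positivity

theorem weightedLpNorm_eq_of_nonneg (hv : ∀ i, 0 ≤ v (x i)) (f : E → F) :
    weightedLpNorm p v f lam x = (∑ i, (‖lam i‖ * v (x i) * ‖f (x i)‖) ^ p) ^ (1 / p) := by
  simp only [weightedLpNorm, Real.mul_rpow (mul_nonneg (norm_nonneg _) (hv _)) (norm_nonneg _),
    Real.mul_rpow (norm_nonneg _) (hv _)]

theorem weightedLpNorm_add_le (hp : 1 ≤ p) (hv : ∀ i, 0 ≤ v (x i)) (f g : E → F) :
    weightedLpNorm p v (f + g) lam x ≤ weightedLpNorm p v f lam x + weightedLpNorm p v g lam x := by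
  simp only [weightedLpNorm_eq_of_nonneg hv]
  calc (∑ i, (‖lam i‖ * v (x i) * ‖(f + g) (x i)‖) ^ p) ^ (1 / p)
      ≤ (∑ i, (‖lam i‖ * v (x i) * ‖f (x i)‖ + ‖lam i‖ * v (x i) * ‖g (x i)‖) ^ p) ^ (1 / p) := by
        simp only [← mul_add, Pi.add_apply]
        gcongr with i
        · exact Finset.sum_nonneg fun i _ => by have := hv i; positivity
        · have := hv i; positivity
        · have := hv i; positivity
        · exact norm_add_le _ _
    _ ≤ _ := Real.Lp_add_le_of_nonneg _ hp (fun i _ => by have := hv i; positivity)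
        (fun i _ => by have := hv i; positivity)

theorem weightedLpNorm_smul [NormedSpace ℂ F] (hp : 0 < p) (hv : ∀ i, 0 ≤ v (x i)) (c : ℂ)
    (f : E → F) :
    weightedLpNorm p v (c • f) lam x = ‖c‖ * weightedLpNorm p v f lam x := by
  have hS : 0 ≤ ∑ i, ‖lam i‖ ^ p * v (x i) ^ p * ‖f (x i)‖ ^ p :=
    Finset.sum_nonneg fun i _ => by have := hv i; positivity
  simp only [weightedLpNorm, Pi.smul_apply, norm_smul,
    Real.mul_rpow (norm_nonneg c) (norm_nonneg _), mul_left_comm _ (‖c‖ ^ p), ← Finset.mul_sum]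
  rw [Real.mul_rpow (by positivity) hS, one_div, Real.rpow_rpow_inv (norm_nonneg c) hp.ne']

theorem weightedLpNorm_zero (hp : 0 < p) : weightedLpNorm p v (0 : E → F) lam x = 0 := by
  simp [weightedLpNorm, Real.zero_rpow hp.ne', hp.ne']

theorem weightedLpNorm_single (hp : 0 < p) {y : E} (hv : 0 ≤ v y) (f : E → F) :
    weightedLpNorm p v f (fun _ : Fin 1 => 1) (fun _ => y) = v y * ‖f y‖ := by
  rw [weightedLpNorm_eq_of_nonneg fun _ => hv, Fin.sum_univ_one, norm_one, one_mul, one_div,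
    Real.rpow_rpow_inv (by positivity) hp.ne']

theorem tendsto_weightedLpNorm {ι : Type*} {l : Filter ι} (hp : 0 < p) {gs : ι → E → F}
    {g : E → F} (h : ∀ i, Tendsto (fun k => gs k (x i)) l (𝓝 (g (x i)))) :
    Tendsto (fun k => weightedLpNorm p v (gs k) lam x) l (𝓝 (weightedLpNorm p v g lam x)) :=
  (Real.continuousAt_rpow_const _ _ (Or.inr (by positivity))).tendsto.comp <|
    tendsto_finsetSum _ fun i _ =>
      ((Real.continuousAt_rpow_const _ _ (Or.inr hp.le)).tendsto.comp (h i).norm).const_mul _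

end WeightedLpNorm

section PSumming

variable {E F : Type*} [NormedAddCommGroup E] [NormedSpace ℂ E]
  [NormedAddCommGroup F] [NormedSpace ℂ F] {p : ℝ} {v : E → ℝ} {U : Set E}

theorem hvSup_nonneg {n : ℕ} {lam : Fin n → ℂ} {x : Fin n → E} (hv : ∀ i, 0 ≤ v (x i)) :
    0 ≤ hvSup p v U lam x :=
  Real.iSup_nonneg fun g => weightedLpNorm_nonneg hv (g : E → ℂ)

theorem hvSup_single_le_one (hp : 0 < p) {y : E} (hv : 0 ≤ v y) (hy : y ∈ U) :
    hvSup p v U (fun _ : Fin 1 => 1) (fun _ => y) ≤ 1 :=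
  Real.iSup_le (fun g => (weightedLpNorm_single hp hv (g : E → ℂ)).trans_le (g.2.2 y hy))
    zero_le_one

namespace PSummingWith

theorem mono (hv : ∀ y ∈ U, 0 ≤ v y) {f : E → F} {C C' : ℝ}
    (hf : PSummingWith p v U f C) (hC : C ≤ C') : PSummingWith p v U f C' :=
  fun n lam x hx => (hf n lam x hx).trans
    (mul_le_mul_of_nonneg_right hC (hvSup_nonneg fun i => hv _ (hx i)))

theorem congr {f g : E → F} {C : ℝ} (hf : PSummingWith p v U f C) (hfg : Set.EqOn f g U) :
    PSummingWith p v U g C := by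
  intro n lam x hx
  have hfgx : ∀ i, g (x i) = f (x i) := fun i => (hfg (hx i)).symm
  simpa only [hfgx] using hf n lam x hx

theorem add (hp : 1 ≤ p) (hv : ∀ y ∈ U, 0 ≤ v y) {f g : E → F} {Cf Cg : ℝ}
    (hf : PSummingWith p v U f Cf) (hg : PSummingWith p v U g Cg) :
    PSummingWith p v U (f + g) (Cf + Cg) := fun n lam x hx =>
  calc weightedLpNorm p v (f + g) lam x
      ≤ weightedLpNorm p v f lam x + weightedLpNorm p v g lam x :=
        weightedLpNorm_add_le hp (fun i => hv _ (hx i)) f g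
    _ ≤ Cf * hvSup p v U lam x + Cg * hvSup p v U lam x :=
        add_le_add (hf n lam x hx) (hg n lam x hx)
    _ = (Cf + Cg) * hvSup p v U lam x := (add_mul _ _ _).symm

theorem smul (hp : 0 < p) (hv : ∀ y ∈ U, 0 ≤ v y) {f : E → F} {C : ℝ}
    (hf : PSummingWith p v U f C) (c : ℂ) : PSummingWith p v U (c • f) (‖c‖ * C) :=
  fun n lam x hx => by
    rw [mul_assoc]
    exact (weightedLpNorm_smul hp (fun i => hv _ (hx i)) c f).trans_le
      (mul_le_mul_of_nonneg_left (hf n lam x hx) (norm_nonneg c))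

theorem zero (hp : 0 < p) : PSummingWith p v U (0 : E → F) 0 := fun n lam x _ => by
  rw [zero_mul]
  exact (weightedLpNorm_zero hp).le

theorem finset_sum (hp : 1 ≤ p) (hv : ∀ y ∈ U, 0 ≤ v y) {ι : Type*} (s : Finset ι)
    {fs : ι → E → F} {C : ι → ℝ} (hfs : ∀ i ∈ s, PSummingWith p v U (fs i) (C i)) :
    PSummingWith p v U (∑ i ∈ s, fs i) (∑ i ∈ s, C i) := by
  classical
  induction s using Finset.induction with
  | empty => simpa using zero (by linarith)
  | insert a s ha ih =>
    rw [Finset.sum_insert ha, Finset.sum_insert ha]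
    exact (hfs a (s.mem_insert_self a)).add hp hv (ih fun i hi => hfs i (s.mem_insert_of_mem hi))

theorem of_tendsto {ι : Type*} {l : Filter ι} [l.NeBot] (hp : 0 < p) {gs : ι → E → F}
    {g : E → F} {C : ℝ} (hgs : ∀ k, PSummingWith p v U (gs k) C)
    (hg : ∀ y ∈ U, Tendsto (fun k => gs k y) l (𝓝 (g y))) : PSummingWith p v U g C :=
  fun n lam x hx => le_of_tendsto (tendsto_weightedLpNorm hp fun i => hg _ (hx i))
    (Eventually.of_forall fun k => hgs k n lam x hx)

theorem tsum (hp : 1 ≤ p) (hv : ∀ y ∈ U, 0 ≤ v y) {ι : Type*} {fs : ι → E → F} {C : ι → ℝ}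
    (hfs : ∀ i, PSummingWith p v U (fs i) (C i)) (hC0 : ∀ i, 0 ≤ C i) (hC : Summable C)
    (hs : ∀ y ∈ U, Summable fun i => fs i y) :
    PSummingWith p v U (fun y => ∑' i, fs i y) (∑' i, C i) := by
  refine of_tendsto (l := atTop) (gs := fun t : Finset ι => ∑ i ∈ t, fs i) (by linarith)
    (fun t => ((finset_sum hp hv t fun i _ => hfs i).mono hv
      (hC.sum_le_tsum t fun i _ => hC0 i))) fun y hy => ?_
  simp only [Finset.sum_apply]
  exact (hs y hy).hasSum

theorem mul_norm_le (hp : 0 < p) (hv : ∀ y ∈ U, 0 ≤ v y) {f : E → F} {C : ℝ}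
    (hf : PSummingWith p v U f C) (hC : 0 ≤ C) {y : E} (hy : y ∈ U) : v y * ‖f y‖ ≤ C :=
  calc v y * ‖f y‖ = weightedLpNorm p v f (fun _ : Fin 1 => 1) (fun _ => y) :=
        (weightedLpNorm_single hp (hv y hy) f).symm
    _ ≤ C * hvSup p v U (fun _ : Fin 1 => 1) (fun _ => y) := hf 1 _ _ fun _ => hy
    _ ≤ C := mul_le_of_le_one_right hC (hvSup_single_le_one hp (hv y hy) hy)

theorem norm_le_div (hp : 0 < p) (hv : ∀ y ∈ U, 0 < v y) {f : E → F} {C : ℝ}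
    (hf : PSummingWith p v U f C) (hC : 0 ≤ C) {y : E} (hy : y ∈ U) : ‖f y‖ ≤ C / v y := by
  rw [le_div_iff₀' (hv y hy)]
  exact hf.mul_norm_le hp (fun z hz => (hv z hz).le) hC hy

theorem tsum_sub_sum_range (hp : 1 ≤ p) (hv : ∀ y ∈ U, 0 ≤ v y) {fs : ℕ → E → F}
    {C : ℕ → ℝ} (hfs : ∀ i, PSummingWith p v U (fs i) (C i)) (hC0 : ∀ i, 0 ≤ C i)
    (hC : Summable C) (hs : ∀ y ∈ U, Summable fun i => fs i y) (n : ℕ) :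
    PSummingWith p v U ((fun y => ∑' i, fs i y) - ∑ i ∈ Finset.range n, fs i)
      (∑' i, C (i + n)) := by
  refine (tsum hp hv (fun i => hfs (i + n)) (fun i => hC0 _) ((summable_nat_add_iff n).2 hC)
    fun y hy => (summable_nat_add_iff n).2 (hs y hy)).congr fun y hy => ?_
  simp only [Pi.sub_apply, Finset.sum_apply, ← (hs y hy).sum_add_tsum_nat_add n,
    add_sub_cancel_left]

end PSummingWith

theorem pihv_nonneg (f : E → F) : 0 ≤ pihv p v U f :=
  Real.sInf_nonneg fun _ hC => hC.1

theorem pihv_le {f : E → F} {C : ℝ} (hC : 0 ≤ C) (hf : PSummingWith p v U f C) :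
    pihv p v U f ≤ C :=
  csInf_le ⟨0, fun _ h => h.1⟩ ⟨hC, hf⟩

theorem psummingWith_pihv (hv : ∀ y ∈ U, 0 ≤ v y) {f : E → F}
    (hf : ∃ C, 0 ≤ C ∧ PSummingWith p v U f C) : PSummingWith p v U f (pihv p v U f) := by
  obtain ⟨C₀, hC₀, hf₀⟩ := hf
  intro n lam x hx
  rcases (hvSup_nonneg (p := p) (U := U) (lam := lam) fun i => hv _ (hx i)).eq_or_lt
    with hzero | hpos
  · simpa only [← hzero, mul_zero] using hf₀ n lam x hx
  · rw [← div_le_iff₀ hpos]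
    exact le_csInf ⟨C₀, hC₀, hf₀⟩ fun C hC => (div_le_iff₀ hpos).2 (hC.2 n lam x hx)

theorem mul_norm_le_pihv (hp : 0 < p) (hv : ∀ y ∈ U, 0 ≤ v y) {f : E → F}
    (hf : ∃ C, 0 ≤ C ∧ PSummingWith p v U f C) {y : E} (hy : y ∈ U) :
    v y * ‖f y‖ ≤ pihv p v U f :=
  (psummingWith_pihv hv hf).mul_norm_le hp hv (pihv_nonneg f) hy

theorem pihv_add_le (hp : 1 ≤ p) (hv : ∀ y ∈ U, 0 ≤ v y) {f g : E → F}
    (hf : ∃ C, 0 ≤ C ∧ PSummingWith p v U f C) (hg : ∃ C, 0 ≤ C ∧ PSummingWith p v U g C) :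
    pihv p v U (f + g) ≤ pihv p v U f + pihv p v U g :=
  pihv_le (add_nonneg (pihv_nonneg f) (pihv_nonneg g))
    ((psummingWith_pihv hv hf).add hp hv (psummingWith_pihv hv hg))

theorem pihv_smul_le (hp : 0 < p) (hv : ∀ y ∈ U, 0 ≤ v y) {f : E → F}
    (hf : ∃ C, 0 ≤ C ∧ PSummingWith p v U f C) (c : ℂ) :
    pihv p v U (c • f) ≤ ‖c‖ * pihv p v U f :=
  pihv_le (mul_nonneg (norm_nonneg c) (pihv_nonneg f)) ((psummingWith_pihv hv hf).smul hp hv c)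

theorem pihv_smul (hp : 0 < p) (hv : ∀ y ∈ U, 0 ≤ v y) {f : E → F}
    (hf : ∃ C, 0 ≤ C ∧ PSummingWith p v U f C) (c : ℂ) :
    pihv p v U (c • f) = ‖c‖ * pihv p v U f := by
  refine (pihv_smul_le hp hv hf c).antisymm ?_
  rcases eq_or_ne c 0 with rfl | hc
  · simpa using pihv_nonneg _
  · have hcf : ∃ C, 0 ≤ C ∧ PSummingWith p v U (c • f) C :=
      ⟨_, mul_nonneg (norm_nonneg c) (pihv_nonneg f), (psummingWith_pihv hv hf).smul hp hv c⟩
    have := pihv_smul_le hp hv hcf c⁻¹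
    rwa [inv_smul_smul₀ hc, norm_inv, ← div_eq_inv_mul, le_div_iff₀' (norm_pos_iff.2 hc)] at this

theorem eq_zero_of_pihv_eq_zero (hp : 0 < p) (hv : ∀ y ∈ U, 0 < v y) {f : E → F}
    (hf : ∃ C, 0 ≤ C ∧ PSummingWith p v U f C) (h0 : pihv p v U f = 0) {y : E} (hy : y ∈ U) :
    f y = 0 := by
  have hle := mul_norm_le_pihv hp (fun z hz => (hv z hz).le) hf hy
  rw [h0, ← mul_zero (v y)] at hle
  exact norm_le_zero_iff.1 (le_of_mul_le_mul_left hle (hv y hy))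

theorem summable_of_psummingWith [CompleteSpace F] (hp : 0 < p) (hv : ∀ y ∈ U, 0 < v y)
    {ι : Type*} {fs : ι → E → F} {C : ι → ℝ} (hfs : ∀ i, PSummingWith p v U (fs i) (C i))
    (hC0 : ∀ i, 0 ≤ C i) (hC : Summable C) {y : E} (hy : y ∈ U) :
    Summable fun i => fs i y :=
  .of_norm_bounded (hC.div_const (v y)) fun i => (hfs i).norm_le_div hp hv (hC0 i) hy

theorem differentiableOn_tsum_of_psummingWith [CompleteSpace F] (hp : 0 < p) (hU : IsOpen U)
    (hvc : ContinuousOn v U) (hv : ∀ y ∈ U, 0 < v y) {ι : Type*} {fs : ι → E → F}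
    {C : ι → ℝ} (hd : ∀ i, DifferentiableOn ℂ (fs i) U)
    (hfs : ∀ i, PSummingWith p v U (fs i) (C i)) (hC0 : ∀ i, 0 ≤ C i) (hC : Summable C) :
    DifferentiableOn ℂ (fun y => ∑' i, fs i y) U := by
  refine differentiableOn_tsum_of_locally_summable_bound hU hd fun x hx =>
    ⟨fun i => C i / (v x / 2), hC.div_const _, ?_⟩
  have hvx : ∀ᶠ y in 𝓝 x, v x / 2 < v y := (hvc.continuousAt (hU.mem_nhds hx)).eventually
    (lt_mem_nhds (half_lt_self (hv x hx)))
  filter_upwards [hvx, hU.mem_nhds hx] with y hvy hy i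
  exact ((hfs i).norm_le_div hp hv (hC0 i) hy).trans
    (div_le_div_of_nonneg_left (hC0 i) (half_pos (hv x hx)) hvy.le)

end PSumming

theorem stmt4_general {E F : Type*} [NormedAddCommGroup E] [NormedSpace ℂ E]
    [NormedAddCommGroup F] [NormedSpace ℂ F] [CompleteSpace F]
    (U : Set E) (hU : IsOpen U) (v : E → ℝ) (hv : ∀ x ∈ U, 0 < v x)
    (hvc : ContinuousOn v U) (p : ℝ) (hp : 1 ≤ p) :
    (∀ f : E → F, DifferentiableOn ℂ f U → (∃ C, 0 ≤ C ∧ PSummingWith p v U f C) →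
      ∀ x ∈ U, v x * ‖f x‖ ≤ pihv p v U f) ∧
    (∀ f g : E → F, DifferentiableOn ℂ f U → DifferentiableOn ℂ g U →
      (∃ C, 0 ≤ C ∧ PSummingWith p v U f C) → (∃ C, 0 ≤ C ∧ PSummingWith p v U g C) →
      (∃ C, 0 ≤ C ∧ PSummingWith p v U (f + g) C) ∧
        pihv p v U (f + g) ≤ pihv p v U f + pihv p v U g) ∧
    (∀ (c : ℂ) (f : E → F), DifferentiableOn ℂ f U →
      (∃ C, 0 ≤ C ∧ PSummingWith p v U f C) →
      (∃ C, 0 ≤ C ∧ PSummingWith p v U (c • f) C) ∧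
        pihv p v U (c • f) = ‖c‖ * pihv p v U f) ∧
    (∀ f : E → F, DifferentiableOn ℂ f U → (∃ C, 0 ≤ C ∧ PSummingWith p v U f C) →
      pihv p v U f = 0 → ∀ x ∈ U, f x = 0) ∧
    (∀ fs : ℕ → E → F, (∀ n, DifferentiableOn ℂ (fs n) U) →
      (∀ n, ∃ C, 0 ≤ C ∧ PSummingWith p v U (fs n) C) →
      Summable (fun n => pihv p v U (fs n)) →
      ∃ f : E → F, DifferentiableOn ℂ f U ∧ (∃ C, 0 ≤ C ∧ PSummingWith p v U f C) ∧
        ∀ ε : ℝ, 0 < ε → ∃ N : ℕ, ∀ n ≥ N,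
          PSummingWith p v U (f - ∑ i ∈ Finset.range n, fs i) ε) := by
  have hp0 : 0 < p := by linarith
  have hv0 : ∀ y ∈ U, 0 ≤ v y := fun y hy => (hv y hy).le
  refine ⟨fun f _ hf y hy => mul_norm_le_pihv hp0 hv0 hf hy,
    fun f g _ _ hf hg => ⟨⟨_, add_nonneg (pihv_nonneg f) (pihv_nonneg g),
      (psummingWith_pihv hv0 hf).add hp hv0 (psummingWith_pihv hv0 hg)⟩,
      pihv_add_le hp hv0 hf hg⟩,
    fun c f _ hf => ⟨⟨_, mul_nonneg (norm_nonneg c) (pihv_nonneg f),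
      (psummingWith_pihv hv0 hf).smul hp0 hv0 c⟩, pihv_smul hp0 hv0 hf c⟩,
    fun f _ hf h0 y hy => eq_zero_of_pihv_eq_zero hp0 hv hf h0 hy,
    fun fs hd hfs hsum => ?_⟩
  set π : ℕ → ℝ := fun i => pihv p v U (fs i)
  have hπ : ∀ i, PSummingWith p v U (fs i) (π i) := fun i => psummingWith_pihv hv0 (hfs i)
  have hπ0 : ∀ i, 0 ≤ π i := fun i => pihv_nonneg _
  have hs : ∀ y ∈ U, Summable fun i => fs i y := fun y hy =>
    summable_of_psummingWith hp0 hv hπ hπ0 hsum hy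
  refine ⟨fun y => ∑' i, fs i y,
    differentiableOn_tsum_of_psummingWith hp0 hU hvc hv hd hπ hπ0 hsum,
    ⟨_, tsum_nonneg hπ0, PSummingWith.tsum hp hv0 hπ hπ0 hsum hs⟩, fun ε hε => ?_⟩
  obtain ⟨N, hN⟩ := eventually_atTop.1 ((tendsto_sum_nat_add π).eventually (gt_mem_nhds hε))
  exact ⟨N, fun n hn =>
    (PSummingWith.tsum_sub_sum_range hp hv0 hπ hπ0 hsum hs n).mono hv0 (hN n hn).le⟩

/-- `(Π_p^{Hv}(U,F), π_p^{Hv})` is a Banach space: `π_p^{Hv}` dominates `‖·‖_v`, is a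
norm (triangle inequality, homogeneity, definiteness), and every absolutely
`π_p^{Hv}`-convergent series converges in the `π_p^{Hv}`-norm. -/
theorem stmt4 {E F : Type*} [NormedAddCommGroup E] [NormedSpace ℂ E] [CompleteSpace E]
    [NormedAddCommGroup F] [NormedSpace ℂ F] [CompleteSpace F]
    (U : Set E) (hU : IsOpen U) (v : E → ℝ) (hv : ∀ x ∈ U, 0 < v x)
    (hvc : ContinuousOn v U) (p : ℝ) (hp : 1 ≤ p) :
    (∀ f : E → F, DifferentiableOn ℂ f U → (∃ C, 0 ≤ C ∧ PSummingWith p v U f C) →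
      ∀ x ∈ U, v x * ‖f x‖ ≤ pihv p v U f) ∧
    (∀ f g : E → F, DifferentiableOn ℂ f U → DifferentiableOn ℂ g U →
      (∃ C, 0 ≤ C ∧ PSummingWith p v U f C) → (∃ C, 0 ≤ C ∧ PSummingWith p v U g C) →
      (∃ C, 0 ≤ C ∧ PSummingWith p v U (f + g) C) ∧
        pihv p v U (f + g) ≤ pihv p v U f + pihv p v U g) ∧
    (∀ (c : ℂ) (f : E → F), DifferentiableOn ℂ f U →
      (∃ C, 0 ≤ C ∧ PSummingWith p v U f C) →
      (∃ C, 0 ≤ C ∧ PSummingWith p v U (c • f) C) ∧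
        pihv p v U (c • f) = ‖c‖ * pihv p v U f) ∧
    (∀ f : E → F, DifferentiableOn ℂ f U → (∃ C, 0 ≤ C ∧ PSummingWith p v U f C) →
      pihv p v U f = 0 → ∀ x ∈ U, f x = 0) ∧
    (∀ fs : ℕ → E → F, (∀ n, DifferentiableOn ℂ (fs n) U) →
      (∀ n, ∃ C, 0 ≤ C ∧ PSummingWith p v U (fs n) C) →
      Summable (fun n => pihv p v U (fs n)) →
      ∃ f : E → F, DifferentiableOn ℂ f U ∧ (∃ C, 0 ≤ C ∧ PSummingWith p v U f C) ∧
        ∀ ε : ℝ, 0 < ε → ∃ N : ℕ, ∀ n ≥ N,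
          PSummingWith p v U (f - ∑ i ∈ Finset.range n, fs i) ε) :=
  stmt4_general U hU v hv hvc p hp
end
end

section
/- The 1-Chevet–Saphar Hv-norm coincides with the projective norm: for every γ ∈ lin((vΔ_v)(U)) ⊗ F, d_1^{Hv}(γ) = inf { ∑ᵢ |λᵢ| v(xᵢ) ‖δ_{xᵢ}‖ ‖yᵢ‖ }, the infimum over all representations γ = ∑ᵢ λᵢ v(xᵢ)δ_{xᵢ} ⊗ yᵢ. -/
open scoped BigOperators
open MeasureTheory

noncomputable section

/-- `‖δ_z‖ = sup_{g ∈ B_{Hv(U)}} |g(z)|`. -/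
def dnorm {E : Type*} [NormedAddCommGroup E] [NormedSpace ℂ E]
    (v : E → ℝ) (U : Set E) (z : E) : ℝ :=
  ⨆ g : HvBall v U, ‖(g : E → ℂ) z‖

/-- `f` belongs to `Hv(U, F*)`. -/
def MemHvDual {E F : Type*} [NormedAddCommGroup E] [NormedSpace ℂ E]
    [NormedAddCommGroup F] [NormedSpace ℂ F]
    (v : E → ℝ) (U : Set E) (f : E → (F →L[ℂ] ℂ)) : Prop :=
  DifferentiableOn ℂ f U ∧ ∃ K, ∀ x ∈ U, v x * ‖f x‖ ≤ K

/-- The action of the molecule `∑ λᵢ v(xᵢ) δ_{xᵢ} ⊗ yᵢ` on `f ∈ Hv(U,F*)`. -/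
def molAct {E F : Type*} [NormedAddCommGroup E] [NormedSpace ℂ E]
    [NormedAddCommGroup F] [NormedSpace ℂ F]
    (v : E → ℝ) {n : ℕ} (lam : Fin n → ℂ) (x : Fin n → E) (y : Fin n → F)
    (f : E → (F →L[ℂ] ℂ)) : ℂ :=
  ∑ i, lam i * (v (x i) : ℂ) * (f (x i)) (y i)

section helper
variable {E F : Type*} [NormedAddCommGroup E] [NormedSpace ℂ E]
  [NormedAddCommGroup F] [NormedSpace ℂ F]

lemma zero_mem_HvBall (v : E → ℝ) (U : Set E) : (0 : E → ℂ) ∈ HvBall v U :=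
  ⟨differentiableOn_const 0, fun x _ => by simp⟩

lemma bddAbove_HvBall (v : E → ℝ) (U : Set E) {z : E} (hz : z ∈ U) (hvz : 0 < v z) :
    BddAbove (Set.range fun g : HvBall v U => ‖(g : E → ℂ) z‖) := by
  refine ⟨1 / v z, ?_⟩
  rintro _ ⟨g, rfl⟩
  rw [le_div_iff₀ hvz, mul_comm]
  exact g.2.2 z hz

lemma norm_le_dnorm (v : E → ℝ) (U : Set E) {z : E} (hz : z ∈ U) (hvz : 0 < v z)
    {g : E → ℂ} (hg : g ∈ HvBall v U) : ‖g z‖ ≤ dnorm v U z :=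
  le_ciSup (bddAbove_HvBall v U hz hvz) (⟨g, hg⟩ : HvBall v U)

lemma dnorm_nonneg (v : E → ℝ) (U : Set E) (z : E) : 0 ≤ dnorm v U z :=
  Real.iSup_nonneg fun _ => norm_nonneg _

lemma apply_eq_zero_of_dnorm_zero {v : E → ℝ} {U : Set E} (hv : ∀ x ∈ U, 0 < v x)
    {z : E} (hz : z ∈ U) (hd : dnorm v U z = 0)
    {f : E → (F →L[ℂ] ℂ)} (hf : MemHvDual v U f) (w : F) : f z w = 0 := by
  obtain ⟨hdiff, K, hK⟩ := hf
  set c : ℝ := max K 1 * (‖w‖ + 1) with hc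
  have hc0 : 0 < c := by positivity
  set g : E → ℂ := fun u => f u w / (c : ℂ) with hg
  have hmem : g ∈ HvBall v U := by
    constructor
    · simp only [hg, div_eq_mul_inv]
      exact (hdiff.clm_apply (differentiableOn_const w)).mul_const _
    · intro u hu
      have h1 : ‖f u w‖ ≤ ‖f u‖ * ‖w‖ := (f u).le_opNorm w
      have h2 : v u * ‖f u w‖ ≤ max K 1 * ‖w‖ := by
        calc v u * ‖f u w‖ ≤ v u * (‖f u‖ * ‖w‖) :=
              mul_le_mul_of_nonneg_left h1 (hv u hu).le
          _ = (v u * ‖f u‖) * ‖w‖ := by ring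
          _ ≤ max K 1 * ‖w‖ :=
              mul_le_mul_of_nonneg_right ((hK u hu).trans (le_max_left _ _)) (norm_nonneg _)
      have h3 : v u * ‖g u‖ = v u * ‖f u w‖ / c := by
        rw [hg]; simp [norm_div, mul_div_assoc]
        norm_num [abs_of_pos hc0]
      rw [h3, div_le_one hc0, hc]
      calc v u * ‖f u w‖ ≤ max K 1 * ‖w‖ := h2
        _ ≤ max K 1 * (‖w‖ + 1) := by
            have : (0:ℝ) < max K 1 := lt_of_lt_of_le one_pos (le_max_right _ _)
            nlinarith
  have hle : ‖g z‖ ≤ 0 := hd ▸ norm_le_dnorm v U hz (hv z hz) hmem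
  have h0 : g z = 0 := by simpa using le_antisymm hle (norm_nonneg _)
  rw [hg, div_eq_zero_iff] at h0
  rcases h0 with h | h
  · exact h
  · exact absurd (Complex.ofReal_eq_zero.mp h) hc0.ne'

end helper

set_option maxHeartbeats 1000000

/-- The `1`-Chevet–Saphar `Hv`-norm coincides with the projective norm: the infimum of
`(sup_{g∈B_{Hv(U)}} max_j |μⱼ| v(zⱼ)|g(zⱼ)|) ⬝ ∑ⱼ ‖wⱼ‖` over all representations equals
the infimum of `∑ⱼ |μⱼ| v(zⱼ) ‖δ_{zⱼ}‖ ‖wⱼ‖` over all representations. -/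
theorem stmt16 {E F : Type*} [NormedAddCommGroup E] [NormedSpace ℂ E] [CompleteSpace E]
    [NormedAddCommGroup F] [NormedSpace ℂ F] [CompleteSpace F]
    (U : Set E) (hU : IsOpen U) (v : E → ℝ) (hv : ∀ x ∈ U, 0 < v x)
    (hvc : ContinuousOn v U)
    (n : ℕ) (lam : Fin n → ℂ) (x : Fin n → E) (y : Fin n → F) (hx : ∀ i, x i ∈ U) :
    sInf {t : ℝ | ∃ (m : ℕ) (mu : Fin m → ℂ) (z : Fin m → E) (w : Fin m → F),
        (∀ j, z j ∈ U) ∧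
        (∀ f, MemHvDual v U f → molAct v lam x y f = molAct v mu z w f) ∧
        t = (⨆ g : HvBall v U, ⨆ j, ‖mu j‖ * v (z j) * ‖(g : E → ℂ) (z j)‖) *
            ∑ j, ‖w j‖}
      = sInf {s : ℝ | ∃ (m : ℕ) (mu : Fin m → ℂ) (z : Fin m → E) (w : Fin m → F),
        (∀ j, z j ∈ U) ∧
        (∀ f, MemHvDual v U f → molAct v lam x y f = molAct v mu z w f) ∧
        s = ∑ j, ‖mu j‖ * (v (z j) * (dnorm v U (z j) * ‖w j‖))} := by
  classical
  haveI : Nonempty (HvBall v U) := ⟨⟨0, zero_mem_HvBall v U⟩⟩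
  set A := {t : ℝ | ∃ (m : ℕ) (mu : Fin m → ℂ) (z : Fin m → E) (w : Fin m → F),
        (∀ j, z j ∈ U) ∧
        (∀ f, MemHvDual v U f → molAct v lam x y f = molAct v mu z w f) ∧
        t = (⨆ g : HvBall v U, ⨆ j, ‖mu j‖ * v (z j) * ‖(g : E → ℂ) (z j)‖) *
            ∑ j, ‖w j‖} with hA
  set B := {s : ℝ | ∃ (m : ℕ) (mu : Fin m → ℂ) (z : Fin m → E) (w : Fin m → F),
        (∀ j, z j ∈ U) ∧
        (∀ f, MemHvDual v U f → molAct v lam x y f = molAct v mu z w f) ∧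
        s = ∑ j, ‖mu j‖ * (v (z j) * (dnorm v U (z j) * ‖w j‖))} with hB
  clear_value B
  have hAne : A.Nonempty := by rw [hA]; exact ⟨_, n, lam, x, y, hx, fun f _ => rfl, rfl⟩
  have hBne : B.Nonempty := by rw [hB]; exact ⟨_, n, lam, x, y, hx, fun f _ => rfl, rfl⟩
  have hAnn : ∀ t ∈ A, (0:ℝ) ≤ t := by
    rw [hA]
    rintro t ⟨m, mu, z, w, hz, -, rfl⟩
    refine mul_nonneg (Real.iSup_nonneg fun g => Real.iSup_nonneg fun j => ?_)
      (Finset.sum_nonneg fun j _ => norm_nonneg _)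
    exact mul_nonneg (mul_nonneg (norm_nonneg _) (hv _ (hz j)).le) (norm_nonneg _)
  have hBnn : ∀ s ∈ B, (0:ℝ) ≤ s := by
    rw [hB]
    rintro s ⟨m, mu, z, w, hz, -, rfl⟩
    exact Finset.sum_nonneg fun j _ => mul_nonneg (norm_nonneg _)
      (mul_nonneg (hv _ (hz j)).le (mul_nonneg (dnorm_nonneg v U _) (norm_nonneg _)))
  have hAbdd : BddBelow A := ⟨0, hAnn⟩
  have hBbdd : BddBelow B := ⟨0, hBnn⟩
  refine le_antisymm (le_csInf hBne ?_) (le_csInf hAne ?_)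
  · -- sInf A ≤ each element of B
    rw [hB]
    rintro s ⟨m, mu, z, w, hz, hmol, rfl⟩
    set sj : Fin m → ℝ := fun j => ‖mu j‖ * (v (z j) * (dnorm v U (z j) * ‖w j‖)) with hsj
    set S : ℝ := ∑ j, sj j with hS
    clear_value S
    have hsjnn : ∀ j, 0 ≤ sj j := fun j => mul_nonneg (norm_nonneg _)
      (mul_nonneg (hv _ (hz j)).le (mul_nonneg (dnorm_nonneg v U _) (norm_nonneg _)))
    have hSnn : 0 ≤ S := by rw [hS]; exact Finset.sum_nonneg fun j _ => hsjnn j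
    set mu' : Fin m → ℂ := fun j =>
      if sj j = 0 then 0 else mu j * ((‖w j‖ * S / sj j : ℝ) : ℂ) with hmu'
    set w' : Fin m → F := fun j =>
      if sj j = 0 then 0 else ((sj j / (S * ‖w j‖) : ℝ) : ℂ) • w j with hw'
    clear_value mu' w'
    have hwne : ∀ j, sj j ≠ 0 → ‖w j‖ ≠ 0 := by
      intro j h hw0
      exact h (by rw [hsj]; simp [hw0])
    have hSne : ∀ j, sj j ≠ 0 → S ≠ 0 := by
      intro j h
      have : sj j ≤ S := by
        rw [hS]; exact Finset.single_le_sum (fun k _ => hsjnn k) (Finset.mem_univ j)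
      exact fun h0 => h (le_antisymm (h0 ▸ this) (hsjnn j))
    have hmol' : ∀ f, MemHvDual v U f → molAct v lam x y f = molAct v mu' z w' f := by
      intro f hf
      rw [hmol f hf]
      unfold molAct
      refine Finset.sum_congr rfl fun j _ => ?_
      by_cases hs : sj j = 0
      · have key : mu j * ((v (z j) : ℝ) : ℂ) * (f (z j)) (w j) = 0 := by
          rcases mul_eq_zero.mp hs with h | h
          · rw [norm_eq_zero.mp h]; ring
          · rcases mul_eq_zero.mp h with h | h
            · exact absurd h (hv _ (hz j)).ne'
            · rcases mul_eq_zero.mp h with h | h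
              · rw [apply_eq_zero_of_dnorm_zero hv (hz j) h hf (w j)]; ring
              · rw [norm_eq_zero.mp h]; simp
        simp only [hmu', hw', if_pos hs, zero_mul, map_zero, mul_zero, key]
      · simp only [hmu', hw', if_neg hs]
        rw [_root_.map_smul, smul_eq_mul]
        have hab0 : (‖w j‖ * S / sj j) * (sj j / (S * ‖w j‖)) = 1 := by
          rw [div_mul_div_comm,
            div_eq_one_iff_eq (mul_ne_zero hs (mul_ne_zero (hSne j hs) (hwne j hs)))]
          ring
        have hab : ((‖w j‖ * S / sj j : ℝ) : ℂ) * ((sj j / (S * ‖w j‖) : ℝ) : ℂ) = 1 := by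
          rw [← Complex.ofReal_mul, hab0, Complex.ofReal_one]
        linear_combination (-(mu j * ((v (z j) : ℝ) : ℂ) * ((f (z j)) (w j)))) * hab
    have hmem : ((⨆ g : HvBall v U, ⨆ j, ‖mu' j‖ * v (z j) * ‖(g : E → ℂ) (z j)‖) *
        ∑ j, ‖w' j‖) ∈ A := by rw [hA]; exact ⟨m, mu', z, w', hz, hmol', rfl⟩
    refine (csInf_le hAbdd hmem).trans ?_
    by_cases hS0 : S = 0
    · have hsum0 : (∑ j, sj j) = 0 := by rw [← hS]; exact hS0
      have hall : ∀ j, sj j = 0 := fun j =>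
        (Finset.sum_eq_zero_iff_of_nonneg (fun k _ => hsjnn k)).mp hsum0 j (Finset.mem_univ j)
      have hw0 : (∑ j, ‖w' j‖) = 0 := by
        refine Finset.sum_eq_zero fun j _ => ?_
        simp [hw', hall j]
      rw [hw0, mul_zero]
      exact hSnn
    · have hSpos : 0 < S := lt_of_le_of_ne hSnn (Ne.symm hS0)
      have hsum : (∑ j, ‖w' j‖) ≤ 1 := by
        have h1 : ∀ j, ‖w' j‖ ≤ sj j / S := by
          intro j
          by_cases hs : sj j = 0
          · simp [hw', hs]
          · have hwj : 0 < ‖w j‖ := lt_of_le_of_ne (norm_nonneg _) (Ne.symm (hwne j hs))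
            have hsp : 0 < sj j := lt_of_le_of_ne (hsjnn j) (Ne.symm hs)
            have heq : ‖w' j‖ = sj j / S := by
              simp only [hw', if_neg hs, norm_smul, Complex.norm_real, Real.norm_eq_abs]
              rw [abs_of_nonneg (div_nonneg (hsjnn j) (mul_pos hSpos hwj).le),
                div_mul_eq_mul_div, mul_div_mul_right _ _ (hwne j hs)]
            exact heq.le
        calc (∑ j, ‖w' j‖) ≤ ∑ j, sj j / S := Finset.sum_le_sum fun j _ => h1 j
          _ = S / S := by rw [← Finset.sum_div, ← hS]
          _ = 1 := div_self hS0
      have hT : (⨆ g : HvBall v U, ⨆ j, ‖mu' j‖ * v (z j) * ‖(g : E → ℂ) (z j)‖) ≤ S := by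
        refine Real.iSup_le (fun g => Real.iSup_le (fun j => ?_) hSnn) hSnn
        by_cases hs : sj j = 0
        · simp only [hmu', if_pos hs]
          simpa using hSnn
        · have hwj : 0 < ‖w j‖ := lt_of_le_of_ne (norm_nonneg _) (Ne.symm (hwne j hs))
          have hsp : 0 < sj j := lt_of_le_of_ne (hsjnn j) (Ne.symm hs)
          have hnm : ‖mu' j‖ = ‖mu j‖ * (‖w j‖ * S / sj j) := by
            simp only [hmu', if_neg hs, norm_mul, Complex.norm_real, Real.norm_eq_abs]
            rw [abs_of_nonneg (div_nonneg (mul_nonneg (norm_nonneg _) hSnn) hsp.le)]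
          rw [hnm]
          have hgd : ‖(g : E → ℂ) (z j)‖ ≤ dnorm v U (z j) :=
            norm_le_dnorm v U (hz j) (hv _ (hz j)) g.2
          calc ‖mu j‖ * (‖w j‖ * S / sj j) * v (z j) * ‖(g : E → ℂ) (z j)‖
              ≤ ‖mu j‖ * (‖w j‖ * S / sj j) * v (z j) * dnorm v U (z j) := by
                exact mul_le_mul_of_nonneg_left hgd
                  (mul_nonneg (mul_nonneg (norm_nonneg _)
                    (div_nonneg (mul_nonneg (norm_nonneg _) hSnn) hsp.le)) (hv _ (hz j)).le)
            _ = S := by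
                have h : ‖mu j‖ * (‖w j‖ * S / sj j) * v (z j) * dnorm v U (z j)
                    = sj j * S / sj j := by simp only [hsj]; ring
                rw [h, mul_comm (sj j) S, mul_div_assoc, div_self hs, mul_one]
      calc (⨆ g : HvBall v U, ⨆ j, ‖mu' j‖ * v (z j) * ‖(g : E → ℂ) (z j)‖) * ∑ j, ‖w' j‖
          ≤ S * 1 := mul_le_mul hT hsum (Finset.sum_nonneg fun j _ => norm_nonneg _) hSnn
        _ = S := mul_one S
  · -- sInf B ≤ each element of A
    rw [hA]
    rintro t ⟨m, mu, z, w, hz, hmol, rfl⟩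
    have hmem : (∑ j, ‖mu j‖ * (v (z j) * (dnorm v U (z j) * ‖w j‖))) ∈ B := by
      rw [hB]; exact ⟨m, mu, z, w, hz, hmol, rfl⟩
    refine (csInf_le hBbdd hmem).trans ?_
    set T : ℝ := ⨆ g : HvBall v U, ⨆ j, ‖mu j‖ * v (z j) * ‖(g : E → ℂ) (z j)‖ with hT
    have hTbdd : BddAbove (Set.range fun g : HvBall v U =>
        ⨆ j, ‖mu j‖ * v (z j) * ‖(g : E → ℂ) (z j)‖) := by
      refine ⟨∑ j, ‖mu j‖, ?_⟩
      rintro _ ⟨g, rfl⟩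
      refine Real.iSup_le (fun j => ?_) (Finset.sum_nonneg fun j _ => norm_nonneg _)
      calc ‖mu j‖ * v (z j) * ‖(g : E → ℂ) (z j)‖
          = ‖mu j‖ * (v (z j) * ‖(g : E → ℂ) (z j)‖) := by ring
        _ ≤ ‖mu j‖ * 1 := mul_le_mul_of_nonneg_left (g.2.2 _ (hz j)) (norm_nonneg _)
        _ = ‖mu j‖ := mul_one _
        _ ≤ ∑ j, ‖mu j‖ := Finset.single_le_sum (fun k _ => norm_nonneg _) (Finset.mem_univ j)
    have hTnn : 0 ≤ T := Real.iSup_nonneg fun g => Real.iSup_nonneg fun j =>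
      mul_nonneg (mul_nonneg (norm_nonneg _) (hv _ (hz j)).le) (norm_nonneg _)
    have haj : ∀ j, ‖mu j‖ * v (z j) * dnorm v U (z j) ≤ T := by
      intro j
      set c : ℝ := ‖mu j‖ * v (z j) with hc
      have hcnn : 0 ≤ c := mul_nonneg (norm_nonneg _) (hv _ (hz j)).le
      rcases eq_or_lt_of_le hcnn with hc0 | hc0
      · rw [← hc0]; simpa using hTnn
      · have hd : dnorm v U (z j) ≤ T / c := by
          refine ciSup_le fun g => ?_
          rw [le_div_iff₀ hc0]
          have h1 : ‖mu j‖ * v (z j) * ‖(g : E → ℂ) (z j)‖ ≤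
              ⨆ k, ‖mu k‖ * v (z k) * ‖(g : E → ℂ) (z k)‖ :=
            le_ciSup (f := fun k => ‖mu k‖ * v (z k) * ‖(g : E → ℂ) (z k)‖)
              (Set.Finite.bddAbove (Set.finite_range _)) j
          have h2 : (⨆ k, ‖mu k‖ * v (z k) * ‖(g : E → ℂ) (z k)‖) ≤ T :=
            le_ciSup hTbdd g
          calc ‖(g : E → ℂ) (z j)‖ * c = ‖mu j‖ * v (z j) * ‖(g : E → ℂ) (z j)‖ := by
                rw [hc]; ring
            _ ≤ T := h1.trans h2
        calc c * dnorm v U (z j) ≤ c * (T / c) := mul_le_mul_of_nonneg_left hd hcnn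
          _ = T := by field_simp
    calc (∑ j, ‖mu j‖ * (v (z j) * (dnorm v U (z j) * ‖w j‖)))
        = ∑ j, (‖mu j‖ * v (z j) * dnorm v U (z j)) * ‖w j‖ := by
          refine Finset.sum_congr rfl fun j _ => by ring
      _ ≤ ∑ j, T * ‖w j‖ := Finset.sum_le_sum fun j _ =>
          mul_le_mul_of_nonneg_right (haj j) (norm_nonneg _)
      _ = T * ∑ j, ‖w j‖ := by rw [Finset.mul_sum]
end
end
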